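/- In a finite bipartite graph with parts A and B, let Q_A be the set of vertices of A lying in every minimum vertex cover and Q_B the set of vertices of B lying in at least one minimum vertex cover. Then Q_A ∪ Q_B is a vertex cover of cardinality equal to the minimum vertex cover number. -/

import Mathlib

/-!
Twist a set `C` of vertices into `C ⇔ A`: keep its part in `A` and complement its part in `B`.
For covers `C, C'`, the set that agrees with `C ∩ C'` on `A` and with `C ∪ C'` on `B` twists to
`(C ⇔ A) ∩ (C' ⇔ A)`. Since `A` and `B` are independent, it is a cover, and so is its dual (`C ∪ C'`
on `A`, `C ∩ C'` on `B`); their sizes add up to `|C| + |C'|`, so for minimum covers `C, C'` both are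
minimum. Hence the twisted minimum covers are closed under intersection, and the intersection of
all of them, which untwists to `Q_A ∪ Q_B`, is itself a twisted minimum cover.
-/

/-- `C` is a vertex cover of the graph `G`. -/
def IsVertexCover {V : Type*} (G : SimpleGraph V) (C : Set V) : Prop :=
  ∀ u v : V, G.Adj u v → u ∈ C ∨ v ∈ C

/-- `C` is a minimum vertex cover of the graph `G`. -/
def IsMinVertexCover {V : Type*} (G : SimpleGraph V) (C : Set V) : Prop :=
  IsVertexCover G C ∧ ∀ C' : Set V, IsVertexCover G C' → C.ncard ≤ C'.ncard

namespace Set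

variable {α : Type*}

theorem ncard_ite (t s s' : Set α) (hs : s.Finite) (hs' : s'.Finite) :
    (t.ite s s').ncard = (s ∩ t).ncard + (s' \ t).ncard :=
  ncard_union_eq (disjoint_sdiff_right.mono_left inter_subset_right) (hs.inter_of_left t) hs'.sdiff

theorem ncard_ite_inter_union_add_ncard_ite_union_inter (t : Set α) {s s' : Set α}
    (hs : s.Finite) (hs' : s'.Finite) :
    (t.ite (s ∩ s') (s ∪ s')).ncard + (t.ite (s ∪ s') (s ∩ s')).ncard = s.ncard + s'.ncard := by
  rw [ncard_ite _ _ _ (hs.inter_of_left _) (hs.union hs'),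
    ncard_ite _ _ _ (hs.union hs') (hs.inter_of_left _), inter_inter_distrib_right,
    union_inter_distrib_right, union_sdiff_distrib, sdiff_inter_distrib_right,
    ← ncard_inter_add_ncard_sdiff_eq_ncard s t hs, ← ncard_inter_add_ncard_sdiff_eq_ncard s' t hs']
  have hin :=
    ncard_inter_add_ncard_union (s ∩ t) (s' ∩ t) (hs.inter_of_left _) (hs'.inter_of_left _)
  have hout := ncard_inter_add_ncard_union (s \ t) (s' \ t) hs.sdiff hs'.sdiff
  omega

end Set

namespace SimpleGraph.IsBipartiteWith

variable {V : Type*} {G : SimpleGraph V} {s t : Set V}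

theorem isIndepSet_left (h : G.IsBipartiteWith s t) : G.IsIndepSet s :=
  fun _ hu _ hv _ huv => Set.disjoint_left.mp h.disjoint hv (h.mem_of_mem_adj hu huv)

theorem isIndepSet_right (h : G.IsBipartiteWith s t) : G.IsIndepSet t :=
  h.symm.isIndepSet_left

end SimpleGraph.IsBipartiteWith

open scoped symmDiff

section MinVertexCover

variable {V : Type*} {G : SimpleGraph V} {A C C' : Set V}

theorem IsVertexCover.ite_inter_union (hA : G.IsIndepSet A) (hC : IsVertexCover G C)
    (hC' : IsVertexCover G C') : IsVertexCover G (A.ite (C ∩ C') (C ∪ C')) := by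
  intro u v huv
  simp only [Set.ite, Set.mem_union, Set.mem_inter_iff, Set.mem_sdiff]
  have hCuv := hC u v huv
  have hC'uv := hC' u v huv
  have hnot_both : ¬ (u ∈ A ∧ v ∈ A) := fun ⟨hu, hv⟩ => hA hu hv huv.ne huv
  tauto

theorem IsMinVertexCover.ite_inter_union [Finite V] (hA : G.IsIndepSet A) (hAc : G.IsIndepSet Aᶜ)
    (hC : IsMinVertexCover G C) (hC' : IsMinVertexCover G C') :
    IsMinVertexCover G (A.ite (C ∩ C') (C ∪ C')) := by
  have hjoin : IsVertexCover G (A.ite (C ∪ C') (C ∩ C')) := by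
    simpa only [Set.ite_compl] using hC.1.ite_inter_union hAc hC'.1
  have hsum := A.ncard_ite_inter_union_add_ncard_ite_union_inter C.toFinite C'.toFinite
  refine ⟨hC.1.ite_inter_union hA hC'.1, fun D hD => ?_⟩
  have hC'_le := hC'.2 _ hjoin
  have hC_le := hC.2 D hD
  omega

theorem exists_isMinVertexCover [Finite V] (G : SimpleGraph V) : ∃ C, IsMinVertexCover G C := by
  obtain ⟨C, hC, hmin⟩ := Set.exists_min_image {C | IsVertexCover G C} Set.ncard (Set.toFinite _)
    ⟨Set.univ, fun u _ _ => Or.inl trivial⟩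
  exact ⟨C, hC, hmin⟩

theorem IsMinVertexCover.ncard_eq_sInf {C : Set V} (hC : IsMinVertexCover G C) :
    C.ncard = sInf {n : ℕ | ∃ C : Set V, IsVertexCover G C ∧ C.ncard = n} :=
  le_antisymm (le_csInf ⟨_, C, hC.1, rfl⟩ fun _ ⟨D, hD, hn⟩ => hn ▸ hC.2 D hD)
    (Nat.sInf_le ⟨C, hC.1, rfl⟩)

theorem isMinVertexCover_setOf_forall_union_setOf_exists [Finite V] (hA : G.IsIndepSet A)
    (hAc : G.IsIndepSet Aᶜ) :
    IsMinVertexCover G ({a ∈ A | ∀ C, IsMinVertexCover G C → a ∈ C} ∪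
      {b ∈ Aᶜ | ∃ C, IsMinVertexCover G C ∧ b ∈ C}) := by
  have hclosed : InfClosed ((· ⇔ A) '' {C | IsMinVertexCover G C}) := by
    rintro _ ⟨C, hC, rfl⟩ _ ⟨C', hC', rfl⟩
    refine ⟨_, hC.ite_inter_union hA hAc hC', ?_⟩
    ext x
    simp only [Set.mem_bihimp_iff, Set.ite, Set.inf_eq_inter, Set.mem_inter_iff, Set.mem_union,
      Set.mem_sdiff]
    tauto
  obtain ⟨C₀, hC₀ : IsMinVertexCover G C₀, hC₀eq⟩ :=
    hclosed.biInf_mem_of_nonempty (Set.toFinite _) (exists_isMinVertexCover G)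
      fun C hC => ⟨C, hC, rfl⟩
  convert hC₀ using 1
  ext x
  have hx : (x ∈ C₀ ↔ x ∈ A) ↔ ∀ C, IsMinVertexCover G C → (x ∈ C ↔ x ∈ A) := by
    have hx₀ := Set.ext_iff.mp hC₀eq x
    simp only [Set.mem_bihimp_iff, Set.iInf_eq_iInter, Set.mem_iInter] at hx₀
    exact hx₀
  by_cases hxA : x ∈ A
  · simpa only [hxA, iff_true, Set.mem_union, Set.mem_ofPred_eq, true_and, Set.mem_compl_iff,
      not_true_eq_false, false_and, or_false] using hx.symm
  · simp only [hxA, iff_false, Set.mem_union, Set.mem_ofPred_eq, false_and, Set.mem_compl_iff,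
      not_false_eq_true, true_and, false_or] at hx ⊢
    rw [← not_iff_not, hx, not_exists]
    simp only [not_and]

end MinVertexCover

theorem stmt16 {V : Type*} [Fintype V] (G : SimpleGraph V) (A B : Set V)
    (hdisj : Disjoint A B) (hunion : A ∪ B = Set.univ)
    (hbip : ∀ u v : V, G.Adj u v → (u ∈ A ∧ v ∈ B) ∨ (u ∈ B ∧ v ∈ A)) :
    IsVertexCover G
      (({a ∈ A | ∀ C : Set V, IsMinVertexCover G C → a ∈ C}) ∪
       ({b ∈ B | ∃ C : Set V, IsMinVertexCover G C ∧ b ∈ C})) ∧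
    (({a ∈ A | ∀ C : Set V, IsMinVertexCover G C → a ∈ C}) ∪
       ({b ∈ B | ∃ C : Set V, IsMinVertexCover G C ∧ b ∈ C})).ncard =
      sInf {n : ℕ | ∃ C : Set V, IsVertexCover G C ∧ C.ncard = n} := by
  have hG : G.IsBipartiteWith A B := ⟨hdisj, hbip⟩
  obtain rfl : Aᶜ = B := IsCompl.compl_eq ⟨hdisj, codisjoint_iff.mpr hunion⟩
  have h := isMinVertexCover_setOf_forall_union_setOf_exists hG.isIndepSet_left hG.isIndepSet_right
  exact ⟨h.1, h.ncard_eq_sInf⟩
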